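/- Let Θ(·;λ) be an odd monotone unbounded thresholding function and P(ξ;λ) = P(0;λ) + P_Θ(ξ;λ) + q(ξ;λ) where P_Θ(ξ;λ) = ∫₀^{|ξ|}(sup{t:Θ(t;λ)≤u} − u)du, q ≥ 0 and q(Θ(t;λ);λ)=0 for all t. Then for every t where Θ(·;λ) is continuous and every ξ, (t−ξ)²/2 + P(ξ;λ) ≥ (t−Θ(t;λ))²/2 + P(Θ(t;λ);λ). -/

import Mathlib

/-!
With `Θ⁻¹ u = sSup {x | Θ x ≤ u}` and `s u = Θ⁻¹ u - u`, the difference of the objective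
`ξ ↦ (t - ξ) ^ 2 / 2 + ∫₀^ξ s` between `ξ` and `Θ t` is `∫_{Θ t}^ξ (Θ⁻¹ u - t) du`.
By monotonicity `Θ⁻¹ u ≥ t` for `u ≥ Θ t` and `Θ⁻¹ u ≤ t` for `u < Θ t`, so this integral is
nonnegative whichever side of `Θ t` the point `ξ` lies on. Oddness reduces everything to
`t, ξ ≥ 0`, where `P_Θ` is this integral and replacing `t, ξ` by `|t|, |ξ|` only decreases
`(t - ξ) ^ 2`; the term `q` vanishes at `Θ t` and is nonnegative elsewhere.
-/

open MeasureTheory Set intervalIntegral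

theorem intervalIntegral.integral_nonneg_of_nonneg_of_nonpos {f : ℝ → ℝ} {a b : ℝ}
    (hf : IntervalIntegrable f volume a b) (hpos : ∀ u ∈ Icc a b, 0 ≤ f u)
    (hneg : ∀ u ∈ Ioo b a, f u ≤ 0) : 0 ≤ ∫ u in a..b, f u := by
  rcases le_total a b with hab | hba
  · exact integral_nonneg hab hpos
  · rw [integral_symm, neg_nonneg]
    simpa using integral_mono_on_of_le_Ioo hba hf.symm
      (intervalIntegrable_const (c := (0 : ℝ))) hneg

theorem sq_abs_sub_abs_of_mul_nonneg {a b : ℝ} (h : 0 ≤ a * b) :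
    (|a| - |b|) ^ 2 = (a - b) ^ 2 := by
  rw [sub_sq, sub_sq, sq_abs, sq_abs, mul_assoc, mul_assoc, ← abs_mul, abs_of_nonneg h]

namespace Monotone

variable {Θ : ℝ → ℝ}

theorem bddAbove_setOf_apply_le (hmono : Monotone Θ) (hubd : ¬ BddAbove (range Θ)) (u : ℝ) :
    BddAbove {x | Θ x ≤ u} := by
  obtain ⟨_, ⟨y, rfl⟩, hy⟩ := not_bddAbove_iff.mp hubd u
  exact ⟨y, fun x hx => hmono.reflect_lt (lt_of_le_of_lt hx hy) |>.le⟩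

-- `sSup ∅ = 0` in `ℝ`, which is why `0 ≤ t` is assumed.
theorem csSup_setOf_apply_le_le {t u : ℝ} (hmono : Monotone Θ) (ht : 0 ≤ t) (hu : u < Θ t) :
    sSup {x | Θ x ≤ u} ≤ t :=
  Real.sSup_le (fun _ hx => (hmono.reflect_lt (lt_of_le_of_lt hx hu)).le) ht

theorem mul_apply_nonneg_of_map_zero (hmono : Monotone Θ) (h0 : Θ 0 = 0) (t : ℝ) :
    0 ≤ t * Θ t := by
  rcases le_total 0 t with ht | ht
  · exact mul_nonneg ht (h0 ▸ hmono ht)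
  · exact mul_nonneg_of_nonpos_of_nonpos ht (h0 ▸ hmono ht)

theorem apply_abs_of_odd (hmono : Monotone Θ) (hodd : Function.Odd Θ) (t : ℝ) :
    Θ |t| = |Θ t| := by
  have h0 := hodd.map_zero
  rcases le_total 0 t with ht | ht
  · rw [abs_of_nonneg ht, abs_of_nonneg (h0 ▸ hmono ht)]
  · rw [abs_of_nonpos ht, hodd, abs_of_nonpos (h0 ▸ hmono ht)]

theorem sq_sub_apply_div_two_add_integral_le {s : ℝ → ℝ} (hmono : Monotone Θ)
    (hubd : ¬ BddAbove (range Θ))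
    (hs : ∀ u, s u = sSup {x | Θ x ≤ u} - u)
    (hint : ∀ a b : ℝ, IntervalIntegrable s volume a b) {t : ℝ} (ht : 0 ≤ t) (ξ : ℝ) :
    (t - Θ t) ^ 2 / 2 + ∫ u in (0 : ℝ)..Θ t, s u ≤ (t - ξ) ^ 2 / 2 + ∫ u in (0 : ℝ)..ξ, s u := by
  have hlin : IntervalIntegrable (fun u => u - t) volume (Θ t) ξ :=
    (continuous_id.sub continuous_const).intervalIntegrable _ _
  have hgap : 0 ≤ ∫ u in Θ t..ξ, (s u + (u - t)) := by
    refine integral_nonneg_of_nonneg_of_nonpos ((hint _ _).add hlin)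
      (fun u hu => ?_) (fun u hu => ?_) <;> rw [hs]
    · linarith [le_csSup (hmono.bddAbove_setOf_apply_le hubd u) (show Θ t ≤ u from hu.1)]
    · linarith [hmono.csSup_setOf_apply_le_le ht hu.2]
  have hquad : ∫ u in Θ t..ξ, (u - t) = (t - ξ) ^ 2 / 2 - (t - Θ t) ^ 2 / 2 := by
    simp only [integral_sub intervalIntegrable_id intervalIntegrable_const,
      integral_id, intervalIntegral.integral_const, smul_eq_mul]
    ring
  rw [integral_add (hint _ _) hlin, hquad] at hgap
  linarith [integral_add_adjacent_intervals (hint 0 (Θ t)) (hint (Θ t) ξ)]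

end Monotone

theorem stmt_10_general (Θ : ℝ → ℝ)
    (hodd : ∀ x, Θ (-x) = -Θ x)
    (hmono : Monotone Θ)
    (hubd : ¬ BddAbove (Set.range Θ))
    (s : ℝ → ℝ)
    (hs : ∀ u, s u = sSup {x : ℝ | Θ x ≤ u} - u)
    (hint : ∀ a b : ℝ, IntervalIntegrable s MeasureTheory.volume a b)
    (P0 : ℝ) (q : ℝ → ℝ) (hq : ∀ x, 0 ≤ q x) (hqΘ : ∀ u, q (Θ u) = 0)
    (P : ℝ → ℝ)
    (hP : ∀ ξ, P ξ = P0 + (∫ u in (0:ℝ)..|ξ|, s u) + q ξ)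
    (t : ℝ) :
    ∀ ξ : ℝ,
      (t - ξ) ^ 2 / 2 + P ξ ≥ (t - Θ t) ^ 2 / 2 + P (Θ t) := by
  intro ξ
  have hcore := hmono.sq_sub_apply_div_two_add_integral_le hubd hs hint (abs_nonneg t) |ξ|
  rw [hmono.apply_abs_of_odd hodd,
    sq_abs_sub_abs_of_mul_nonneg
    (hmono.mul_apply_nonneg_of_map_zero (Function.Odd.map_zero hodd) t)] at hcore
  have habs : (|t| - |ξ|) ^ 2 ≤ (t - ξ) ^ 2 := sq_le_sq.mpr (abs_abs_sub_abs_le_abs_sub t ξ)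
  rw [hP, hP, hqΘ]
  linarith [hq ξ]

theorem stmt_10 (Θ : ℝ → ℝ)
    (hodd : ∀ x, Θ (-x) = -Θ x)
    (hmono : Monotone Θ)
    (hubd : ¬ BddAbove (Set.range Θ))
    (hlbd : ¬ BddBelow (Set.range Θ))
    (s : ℝ → ℝ)
    (hs : ∀ u, s u = sSup {x : ℝ | Θ x ≤ u} - u)
    (hsnn : ∀ u, 0 ≤ s u)
    (hint : ∀ a b : ℝ, IntervalIntegrable s MeasureTheory.volume a b)
    (P0 : ℝ) (q : ℝ → ℝ) (hq : ∀ x, 0 ≤ q x) (hqΘ : ∀ u, q (Θ u) = 0)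
    (P : ℝ → ℝ)
    (hP : ∀ ξ, P ξ = P0 + (∫ u in (0:ℝ)..|ξ|, s u) + q ξ)
    (t : ℝ) (hcont : ContinuousAt Θ t) :
    ∀ ξ : ℝ,
      (t - ξ) ^ 2 / 2 + P ξ ≥ (t - Θ t) ^ 2 / 2 + P (Θ t) :=
  stmt_10_general Θ hodd hmono hubd s hs hint P0 q hq hqΘ P hP t
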